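/- Let d₁, d₂ > 0 and for an integer i ≥ 0 and x ∈ [2, ∞] define I(i, x) = d₁·∫_2^x (log y)^{i − 3/4}·exp(−d₂·√(log y))/y dy. Then for all integers i ≥ ℓ ≥ 0 and all real x ≥ e, I(i, x)/(log x)^i ≤ I(ℓ, ∞)/(log x)^ℓ, and in particular I(ℓ, ∞) is finite. -/

import Mathlib

open Filter MeasureTheory

/-- `I(i, x)` for finite `x`: `d₁ ∫_2^x (log y)^{i - 3/4} exp(-d₂ √(log y)) / y dy`. -/
noncomputable def Ifin (d₁ d₂ : ℝ) (i : ℕ) (x : ℝ) : ℝ :=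
  d₁ * ∫ y in (2 : ℝ)..x,
    (Real.log y) ^ ((i : ℝ) - 3 / 4) * Real.exp (-d₂ * Real.sqrt (Real.log y)) / y

/-- `I(i, ∞)`: `d₁ ∫_2^∞ (log y)^{i - 3/4} exp(-d₂ √(log y)) / y dy`. -/
noncomputable def Iinf (d₁ d₂ : ℝ) (i : ℕ) : ℝ :=
  d₁ * ∫ y in Set.Ioi (2 : ℝ),
    (Real.log y) ^ ((i : ℝ) - 3 / 4) * Real.exp (-d₂ * Real.sqrt (Real.log y)) / y

/-!
For `1 < y ≤ x` we have `(log y)^(i - 3/4) ≤ (log x)^(i - ℓ) (log y)^(ℓ - 3/4)`, so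
`I(i, x) ≤ (log x)^(i - ℓ) I(ℓ, x) ≤ (log x)^(i - ℓ) I(ℓ, ∞)`, the integrand being nonnegative.
Finiteness of `I(ℓ, ∞)`: after the substitution `y = exp t` the integrand becomes
`t^a exp(-d₂ √t) = O(t⁻²)`.
-/

open Set Real Topology Asymptotics

noncomputable def logIntegrand (b a y : ℝ) : ℝ :=
  log y ^ a * exp (-b * √(log y)) / y

lemma rpow_mul_exp_neg_mul_sqrt_isBigO (a : ℝ) {b : ℝ} (hb : 0 < b) :
    (fun t : ℝ => t ^ a * exp (-b * √t)) =O[atTop] fun t => t ^ (-2 : ℝ) := by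
  have hlim : Tendsto (fun t : ℝ => t ^ a * exp (-b * √t) / t ^ (-2 : ℝ)) atTop (𝓝 0) := by
    refine ((tendsto_rpow_mul_exp_neg_mul_atTop_nhds_zero (2 * (a + 2)) b hb).comp
      tendsto_sqrt_atTop).congr' ?_
    filter_upwards [eventually_gt_atTop 0] with t ht
    have hsqrt : √t ^ (2 * (a + 2)) = t ^ (a + 2) := by
      rw [rpow_mul (sqrt_nonneg t), rpow_two, sq_sqrt ht.le]
    rw [Function.comp_apply, hsqrt, div_eq_mul_inv, ← rpow_neg ht.le, neg_neg, mul_right_comm,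
      ← rpow_add ht]
  refine isBigO_of_div_tendsto_nhds ?_ 0 hlim
  filter_upwards [eventually_gt_atTop 0] with t ht h
  exact absurd h (by positivity)

lemma integrableOn_Ioi_rpow_mul_exp_neg_mul_sqrt (a : ℝ) {b c : ℝ} (hb : 0 < b) (hc : 0 < c) :
    IntegrableOn (fun t : ℝ => t ^ a * exp (-b * √t)) (Ioi c) := by
  have hcont : ContinuousOn (fun t : ℝ => t ^ a * exp (-b * √t)) (Ici c) :=
    (continuousOn_id.rpow_const fun t ht => Or.inl (hc.trans_le ht).ne').mul (by fun_prop)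
  exact ((hcont.locallyIntegrableOn measurableSet_Ici).integrableOn_of_isBigO_atTop
    (rpow_mul_exp_neg_mul_sqrt_isBigO a hb)
    ⟨Ioi c, Ioi_mem_atTop c, integrableOn_Ioi_rpow_of_lt (by norm_num) hc⟩).mono_set
    Ioi_subset_Ici_self

lemma integrableOn_Ioi_logIntegrand (a : ℝ) {b c : ℝ} (hb : 0 < b) (hc : 1 < c) :
    IntegrableOn (logIntegrand b a) (Ioi c) := by
  have hc₀ : 0 < c := one_pos.trans hc
  rw [← exp_log hc₀, ← image_exp_Ioi, integrableOn_image_iff_integrableOn_abs_deriv_smul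
    measurableSet_Ioi (fun t _ => (hasDerivAt_exp t).hasDerivWithinAt) exp_injective.injOn]
  refine (integrableOn_Ioi_rpow_mul_exp_neg_mul_sqrt a hb (log_pos hc)).congr_fun
    (fun t _ => ?_) measurableSet_Ioi
  simp only [logIntegrand, smul_eq_mul, log_exp, abs_of_pos (exp_pos t)]
  field_simp

lemma logIntegrand_nonneg (b a : ℝ) {y : ℝ} (hy : 1 ≤ y) : 0 ≤ logIntegrand b a y := by
  have := log_nonneg hy
  unfold logIntegrand
  positivity

lemma logIntegrand_add_nat_le (b a : ℝ) (n : ℕ) {x y : ℝ} (hy : 1 < y) (hyx : y ≤ x) :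
    logIntegrand b (a + n) y ≤ log x ^ n * logIntegrand b a y := by
  have hlog : 0 < log y := log_pos hy
  have hpow : log y ^ n ≤ log x ^ n :=
    pow_le_pow_left₀ hlog.le (log_le_log (one_pos.trans hy) hyx) n
  calc logIntegrand b (a + n) y = log y ^ n * logIntegrand b a y := by
        simp only [logIntegrand, rpow_add hlog, rpow_natCast]; ring
    _ ≤ log x ^ n * logIntegrand b a y :=
        mul_le_mul_of_nonneg_right hpow (logIntegrand_nonneg b a hy.le)

lemma integral_logIntegrand_add_nat_le (a : ℝ) {b c x : ℝ} (hb : 0 < b) (hc : 1 < c)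
    (hcx : c ≤ x) (n : ℕ) :
    ∫ y in c..x, logIntegrand b (a + n) y ≤ log x ^ n * ∫ y in Ioi c, logIntegrand b a y := by
  have hint (a' : ℝ) : IntervalIntegrable (logIntegrand b a') volume c x :=
    (intervalIntegrable_iff_integrableOn_Ioc_of_le hcx).2
      ((integrableOn_Ioi_logIntegrand a' hb hc).mono_set Ioc_subset_Ioi_self)
  have hnonneg : 0 ≤ᵐ[volume.restrict (Ioi c)] logIntegrand b a :=
    (ae_restrict_iff' measurableSet_Ioi).2 <| ae_of_all _ fun y hy =>
      logIntegrand_nonneg b a (hc.trans hy).le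
  have hlog : 0 ≤ log x := log_nonneg (hc.le.trans hcx)
  calc ∫ y in c..x, logIntegrand b (a + n) y
      ≤ ∫ y in c..x, log x ^ n * logIntegrand b a y :=
        intervalIntegral.integral_mono_on hcx (hint _) ((hint a).const_mul _)
          fun y hy => logIntegrand_add_nat_le b a n (hc.trans_le hy.1) hy.2
    _ = log x ^ n * ∫ y in Ioc c x, logIntegrand b a y := by
        rw [intervalIntegral.integral_const_mul, intervalIntegral.integral_of_le hcx]
    _ ≤ log x ^ n * ∫ y in Ioi c, logIntegrand b a y := by
        refine mul_le_mul_of_nonneg_left ?_ (pow_nonneg hlog n)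
        exact setIntegral_mono_set (integrableOn_Ioi_logIntegrand a hb hc) hnonneg
          Ioc_subset_Ioi_self.eventuallyLE

theorem stmt13 (d₁ d₂ : ℝ) (hd₁ : 0 < d₁) (hd₂ : 0 < d₂) (i ℓ : ℕ) (hiℓ : ℓ ≤ i) :
    (∀ x : ℝ, Real.exp 1 ≤ x →
      Ifin d₁ d₂ i x / (Real.log x) ^ i ≤ Iinf d₁ d₂ ℓ / (Real.log x) ^ ℓ)
    ∧ IntegrableOn
        (fun y : ℝ =>
          (Real.log y) ^ ((ℓ : ℝ) - 3 / 4) * Real.exp (-d₂ * Real.sqrt (Real.log y)) / y)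
        (Set.Ioi (2 : ℝ)) := by
  refine ⟨fun x hx => ?_, integrableOn_Ioi_logIntegrand _ hd₂ one_lt_two⟩
  have hx₂ : 2 ≤ x := (by linarith [add_one_le_exp 1] : (2 : ℝ) ≤ exp 1).trans hx
  have hlog : 0 < log x := log_pos (one_lt_two.trans_le hx₂)
  have hexponent : (i : ℝ) - 3 / 4 = ((ℓ : ℝ) - 3 / 4) + (i - ℓ : ℕ) := by
    push_cast [hiℓ]; ring
  have key := integral_logIntegrand_add_nat_le ((ℓ : ℝ) - 3 / 4) hd₂ one_lt_two hx₂ (i - ℓ)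
  rw [← hexponent, pow_sub₀ _ hlog.ne' hiℓ] at key
  show d₁ * (∫ y in 2..x, logIntegrand d₂ (i - 3 / 4) y) / log x ^ i
    ≤ d₁ * (∫ y in Ioi 2, logIntegrand d₂ (ℓ - 3 / 4) y) / log x ^ ℓ
  calc _ ≤ d₁ * (log x ^ i * (log x ^ ℓ)⁻¹ * ∫ y in Ioi 2, logIntegrand d₂ (ℓ - 3 / 4) y)
        / log x ^ i := by gcongr
    _ = _ := by field_simp
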